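/- Every (non-extended) open graph with a gflow admits a focused gflow: if (G, I, O, λ) with λ constantly {X,Y} has a gflow, then it has a gflow g such that Odd(g(u)) ∩ Oᶜ = {u} for all u ∈ Oᶜ. -/

import Mathlib

/-!
Focus the correction sets one vertex at a time, latest vertices first (well-founded induction
along the finite strict order of the gflow). If `v ≠ u` is a non-output vertex of `Odd(g u)`,
then `v` comes after `u`, and since `Odd` is additive for `∆`, replacing `g u` by
`g u ∆ g' v`, with `g' v` an already focused correction set of `v`, removes `v` from
`Odd(g u) ∩ Oᶜ` and adds only vertices after `u`, so all gflow conditions at `u` survive.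
Repeating this until `Odd(g u) ∩ Oᶜ = {u}` terminates since that set shrinks.
-/

open scoped symmDiff

inductive Pauli | X | Y | Z
deriving DecidableEq

inductive MPlane | XY | XZ | YZ
deriving DecidableEq

/-- The set of Pauli operators defining a measurement plane. -/
def MPlane.paulis : MPlane → Finset Pauli
  | .XY => {.X, .Y}
  | .XZ => {.X, .Z}
  | .YZ => {.Y, .Z}

variable {V : Type} [Fintype V] [DecidableEq V]

/-- Odd neighbourhood: vertices with an odd number of neighbours in `A`. -/
def oddNbhd (G : SimpleGraph V) [DecidableRel G.Adj] (A : Finset V) : Finset V :=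
  Finset.univ.filter fun w => Odd (A.filter (G.Adj w)).card

/-- `f` is extensive w.r.t. the strict order `r`. -/
def IsExtensive (O : Finset V) (r : V → V → Prop) (f : V → Finset V) : Prop :=
  ∀ u ∉ O, ∀ v ∈ f u, v ≠ u → r u v

/-- gflow of an extended open graph `(G, I, O, lam)`. -/
def IsGflow (G : SimpleGraph V) [DecidableRel G.Adj]
    (I O : Finset V) (lam : V → MPlane) (g : V → Finset V) : Prop :=
  (∀ u ∉ O, g u ⊆ Iᶜ) ∧
  (∃ r : V → V → Prop, IsStrictOrder V r ∧
    IsExtensive O r (fun u => g u ∪ oddNbhd G (g u))) ∧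
  ∀ u ∉ O,
    (lam u = .XY → u ∈ oddNbhd G (g u) ∧ u ∉ g u) ∧
    (lam u = .XZ → u ∈ g u ∧ u ∈ oddNbhd G (g u)) ∧
    (lam u = .YZ → u ∈ g u ∧ u ∉ oddNbhd G (g u))

/-- σ-normal forms for gflows. -/
def IsNF (σ : Pauli) (G : SimpleGraph V) [DecidableRel G.Adj]
    (O : Finset V) (g : V → Finset V) : Prop :=
  match σ with
  | .X => ∀ u ∉ O, oddNbhd G (g u) ⊆ insert u O
  | .Y => ∀ u ∉ O, (g u ∆ oddNbhd G (g u)) ⊆ insert u O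
  | .Z => ∀ u ∉ O, g u ⊆ insert u O


namespace Finset

variable {α : Type*} [DecidableEq α]

theorem card_symmDiff_add_two_mul_card_inter (s t : Finset α) :
    #(s ∆ t) + 2 * #(s ∩ t) = #s + #t := by
  rw [symmDiff_eq_sup_sdiff_inf, sup_eq_union, inf_eq_inter,
    card_sdiff_of_subset inter_subset_union, ← card_union_add_card_inter]
  have := card_le_card (inter_subset_union (s := s) (t := t))
  omega

theorem filter_symmDiff (p : α → Prop) [DecidablePred p] (s t : Finset α) :
    (s ∆ t).filter p = s.filter p ∆ t.filter p := by
  ext a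
  simp only [mem_filter, mem_symmDiff]
  tauto

theorem symmDiff_inter_distrib_right (s t u : Finset α) : s ∆ t ∩ u = (s ∩ u) ∆ (t ∩ u) :=
  inf_symmDiff_distrib_right s t u

end Finset

open Finset

theorem oddNbhd_symmDiff (G : SimpleGraph V) [DecidableRel G.Adj] (A B : Finset V) :
    oddNbhd G (A ∆ B) = oddNbhd G A ∆ oddNbhd G B := by
  ext w
  simp only [oddNbhd, mem_symmDiff, mem_filter, mem_univ, true_and, filter_symmDiff]
  have := card_symmDiff_add_two_mul_card_inter (A.filter (G.Adj w)) (B.filter (G.Adj w))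
  simp only [Nat.odd_iff]
  omega

section Correctors

variable (G : SimpleGraph V) [DecidableRel G.Adj] (I : Finset V) (r : V → V → Prop)

def IsXYCorrector (u : V) (F : Finset V) : Prop :=
  F ⊆ Iᶜ ∧ (∀ w ∈ F ∪ oddNbhd G F, w ≠ u → r u w) ∧ u ∈ oddNbhd G F ∧ u ∉ F

theorem isGflow_XY_iff (O : Finset V) (g : V → Finset V) :
    IsGflow G I O (fun _ => .XY) g ↔
      ∃ r : V → V → Prop, IsStrictOrder V r ∧ ∀ u ∉ O, IsXYCorrector G I r u (g u) := by
  simp only [IsGflow, IsExtensive, IsXYCorrector, reduceCtorEq, IsEmpty.forall_iff, and_true,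
    forall_const]
  constructor
  · rintro ⟨hI, ⟨r, hr, hext⟩, hXY⟩
    exact ⟨r, hr, fun u hu => ⟨hI u hu, hext u hu, hXY u hu⟩⟩
  · rintro ⟨r, hr, h⟩
    exact ⟨fun u hu => (h u hu).1, ⟨r, hr, fun u hu => (h u hu).2.1⟩,
      fun u hu => (h u hu).2.2⟩

variable {G I r} [IsStrictOrder V r]

theorem IsXYCorrector.symmDiff {u v : V} {F F' : Finset V} (hF : IsXYCorrector G I r u F)
    (huv : r u v) (hF' : IsXYCorrector G I r v F') : IsXYCorrector G I r u (F ∆ F') := by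
  obtain ⟨hFI, hFr, huF, huF'⟩ := hF
  obtain ⟨hF'I, hF'r, -, -⟩ := hF'
  have hlater : ∀ w ∈ F' ∪ oddNbhd G F', r u w := fun w hw => by
    rcases eq_or_ne w v with rfl | hwv
    · exact huv
    · exact _root_.trans huv (hF'r w hw hwv)
  have hu : u ∉ F' ∪ oddNbhd G F' := fun h => irrefl u (hlater u h)
  refine ⟨symmDiff_subset_union.trans (union_subset hFI hF'I), fun w hw hwu => ?_, ?_, ?_⟩
  · rw [oddNbhd_symmDiff] at hw
    have : w ∈ (F ∪ oddNbhd G F) ∪ (F' ∪ oddNbhd G F') := by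
      simp only [mem_union, mem_symmDiff] at hw ⊢
      tauto
    rcases mem_union.mp this with h | h
    · exact hFr w h hwu
    · exact hlater w h
  · rw [oddNbhd_symmDiff, mem_symmDiff]
    exact Or.inl ⟨huF, fun h => hu (mem_union_right _ h)⟩
  · rw [mem_symmDiff]
    rintro (⟨h, -⟩ | ⟨h, -⟩)
    · exact huF' h
    · exact hu (mem_union_left _ h)

theorem IsXYCorrector.exists_focused {O : Finset V} {u : V} (hu : u ∉ O)
    (hlater : ∀ v ∉ O, r u v → ∃ F, IsXYCorrector G I r v F ∧ oddNbhd G F ∩ Oᶜ = {v})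
    {F : Finset V} (hF : IsXYCorrector G I r u F) :
    ∃ F, IsXYCorrector G I r u F ∧ oddNbhd G F ∩ Oᶜ = {u} := by
  induction hn : #(oddNbhd G F ∩ Oᶜ) using Nat.strong_induction_on generalizing F with
  | _ n ih =>
  have huF : u ∈ oddNbhd G F ∩ Oᶜ := mem_inter.mpr ⟨hF.2.2.1, mem_compl.mpr hu⟩
  by_cases hfocused : oddNbhd G F ∩ Oᶜ = {u}
  · exact ⟨F, hF, hfocused⟩
  obtain ⟨v, hv, hvu⟩ := ((nontrivial_iff_ne_singleton huF).mpr hfocused).exists_ne u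
  obtain ⟨hvF, hvO⟩ := mem_inter.mp hv
  have huv : r u v := hF.2.1 v (mem_union_right _ hvF) hvu
  obtain ⟨F', hF', hF'focused⟩ := hlater v (mem_compl.mp hvO) huv
  have herase : oddNbhd G (F ∆ F') ∩ Oᶜ = (oddNbhd G F ∩ Oᶜ).erase v := by
    rw [oddNbhd_symmDiff, symmDiff_inter_distrib_right, hF'focused,
      symmDiff_of_ge (singleton_subset_iff.mpr hv), sdiff_singleton_eq_erase]
  refine ih _ ?_ (hF.symmDiff huv hF') rfl
  rw [herase, ← hn]
  exact card_erase_lt_of_mem hv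

end Correctors

/-- Every open graph (all measurements in the {X,Y}-plane) with a gflow admits a
focused gflow. -/
theorem exists_focused_gflow (G : SimpleGraph V) [DecidableRel G.Adj]
    (I O : Finset V)
    (h : ∃ g : V → Finset V, IsGflow G I O (fun _ => .XY) g) :
    ∃ g : V → Finset V, IsGflow G I O (fun _ => .XY) g ∧
      ∀ u ∉ O, oddNbhd G (g u) ∩ Oᶜ = {u} := by
  obtain ⟨g, hg⟩ := h
  obtain ⟨r, hr, hg⟩ := (isGflow_XY_iff G I O g).mp hg
  have hfocused : ∀ u ∉ O, ∃ F, IsXYCorrector G I r u F ∧ oddNbhd G F ∩ Oᶜ = {u} := by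
    intro u
    induction u using (Finite.wellFounded_of_trans_of_irrefl (Function.swap r)).induction with
    | _ u ih => exact fun hu => (hg u hu).exists_focused hu fun v hv huv => ih v huv hv
  choose! F hF using hfocused
  exact ⟨F, (isGflow_XY_iff G I O F).mpr ⟨r, hr, fun u hu => (hF u hu).1⟩,
    fun u hu => (hF u hu).2⟩
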